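/- For every process P in normal form, the number of propagators saved by the optimized decomposition is at least 40 percent of the propagators used in the naive decomposition: 5 * (sizeHO P + 2 * trCount P - sizeOpt P) ≥ 2 * (sizeHO P + 2 * trCount P), where subtraction is over the integers (or, equivalently, sizeOpt P ≤ sizeHO P + 2 * trCount P and the inequality holds in ℕ). -/
import Mathlib


inductive Proc : Type
  | nil : Proc
  | out : Proc → Proc
  | inp : Proc → Proc
  | res : Proc → Proc
  | resTr : Proc → Proc
  | par : Proc → Proc → Proc

def sizeHO : Proc → ℕ
  | .nil => 1
  | .out P => sizeHO P + 3
  | .inp P => sizeHO P + 3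
  | .res P => sizeHO P
  | .resTr P => sizeHO P
  | .par P Q => sizeHO P + sizeHO Q + 1

def sizeOpt : Proc → ℕ
  | .nil => 1
  | .out P => sizeOpt P + 1
  | .inp P => sizeOpt P + 1
  | .res P => sizeOpt P
  | .resTr P => sizeOpt P + 1
  | .par P Q => sizeOpt P + sizeOpt Q + 1

def trCount : Proc → ℕ
  | .nil => 0
  | .out P => trCount P
  | .inp P => trCount P
  | .res P => trCount P
  | .resTr P => trCount P + 1
  | .par P Q => trCount P + trCount Q

inductive NF : Proc → Prop
  | outNil : NF (.out .nil)
  | inpNil : NF (.inp .nil)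
  | out {P} : NF P → NF (.out P)
  | inp {P} : NF P → NF (.inp P)
  | res {P} : NF P → NF (.res P)
  | resTr {P} : NF P → NF (.resTr P)
  | par {P Q} : NF P → NF Q → NF (.par P Q)

lemma main (P : Proc) (h : NF P) : 5 * sizeOpt P + 2 ≤ 3 * (sizeHO P + 2 * trCount P) := by
  induction h with
  | outNil => simp [sizeOpt, sizeHO, trCount]
  | inpNil => simp [sizeOpt, sizeHO, trCount]
  | out _ ih => simp [sizeOpt, sizeHO, trCount]; omega
  | inp _ ih => simp [sizeOpt, sizeHO, trCount]; omega
  | res _ ih => simpa [sizeOpt, sizeHO, trCount] using ih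
  | resTr _ ih => simp [sizeOpt, sizeHO, trCount]; omega
  | par _ _ ih1 ih2 => simp [sizeOpt, sizeHO, trCount]; omega

theorem stmt_5 (P : Proc) (h : NF P) :
    sizeOpt P ≤ sizeHO P + 2 * trCount P ∧
    5 * (sizeHO P + 2 * trCount P - sizeOpt P) ≥ 2 * (sizeHO P + 2 * trCount P) := by
  have key : 5 * sizeOpt P + 2 ≤ 3 * (sizeHO P + 2 * trCount P) := main P h
  constructor
  · omega
  · omega
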